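/- arXiv:1801.06258 — 5 statements merged into one kernel-verified Lean document; each statement's English description precedes it below -/
import Mathlib

section
/- In the 2DistinctSCS instance, {s_1,…,s_n} has a common supersequence of length at most t if and only if the best diff from the source B-values to the target B-values under the family F(U,←), with operation cost κ₀ + κ₁·r where κ₀ = 1 and κ₁ = t+99, has cost at most t + 2n(t+99). -/
/-!
No range of a diff contains a separator value `4m`: an operation covering `4m` would leave the two
keys with `A`-value `4m` with equal `B`-values for good. So a range meets at most one block
`{4k-3, 4k-2, 4k-1}` of `A`-values. In the block of `s_k` the last operations covering `4k-3` and
`4k-2` write `u_k` and `v_k ≠ u_k`, so at least two ranges meet every block. As one range costs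
`t + 99 > t`, a diff of cost at most `t + 2n(t+99)` has at most `t` operations and exactly two
ranges meeting each block. Then a single range covers `4k-3` and `4k-1`, hence also `4k-2`, so the
operation writing `u_k` comes before the one writing `v_k`: the values written by the operations
form a supersequence. Conversely, a supersequence `w` gives one operation per letter of `w`,
writing the whole block of `s_k` at the position of `u_k` and its middle value `4k-2` at the later
position of `v_k`.

Below, blocks are indexed from `0`: block `k` is `{4k+1, 4k+2, 4k+3}` and belongs to `s_{k+1}`.
-/

open scoped Classical

/-- An operation of the family `F(U,←)`: a finite union of closed real ranges
`⋃_j [a_j, z_j]` (given as a list of pairs) and a value `b`; the condition is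
`A ∈ ⋃_j [a_j, z_j]` and the modifier is the assignment `B ← b`. -/
structure OpUnionAsg where
  ranges : List (ℝ × ℝ)
  b : ℝ

/-- The condition of an operation of `F(U,←)`, evaluated on an `A`-value `v`:
`v` lies in some range of the union. -/
def OpUnionAsg.cond (f : OpUnionAsg) (v : ℤ) : Prop :=
  ∃ p ∈ f.ranges, p.1 ≤ (v : ℝ) ∧ (v : ℝ) ≤ p.2

/-- Applying an operation of `F(U,←)`: every key whose `A`-value lies in the union gets
its `B`-value replaced by `b`; other keys are unchanged. -/
noncomputable def OpUnionAsg.apply {K : Type*} (α : K → ℤ) (f : OpUnionAsg) (β : K → ℝ) :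
    K → ℝ :=
  fun k => if f.cond (α k) then f.b else β k

/-- Successive application of a finite sequence of operations of `F(U,←)`. -/
noncomputable def applyOpsUnionAsg {K : Type*} (α : K → ℤ) (L : List OpUnionAsg)
    (β : K → ℝ) : K → ℝ :=
  L.foldl (fun β' f => f.apply α β') β

/-- `L` is a diff from `βS` to `βT` under `F(U,←)`. -/
def IsDiffUnionAsg {K : Type*} (α : K → ℤ) (L : List OpUnionAsg) (βS βT : K → ℝ) : Prop :=
  applyOpsUnionAsg α L βS = βT

/-- `A`-values of the 2DistinctSCS instance on the key set `{0,…,5n+1}`: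
the keys `5k` and `5k+1` have `A`-value `4k` (for `0 ≤ k ≤ n`), and the keys
`5k-3, 5k-2, 5k-1` have `A`-values `4k-3, 4k-2, 4k-1` (for `1 ≤ k ≤ n`). -/
def scsAlpha (n : ℕ) : Fin (5 * n + 2) → ℤ :=
  fun j => ((4 * ((j : ℕ) / 5) + (if (j : ℕ) % 5 ≤ 1 then 0 else (j : ℕ) % 5 - 1) : ℕ) : ℤ)

/-- Source `B`-values of the 2DistinctSCS instance: `-1` at keys `5k`, `-2` at keys
`5k+1`, and `0` at the keys `5k-3, 5k-2, 5k-1`. -/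
def scsBS (n : ℕ) : Fin (5 * n + 2) → ℝ :=
  fun j => if (j : ℕ) % 5 = 0 then -1 else if (j : ℕ) % 5 = 1 then -2 else 0

/-- Target `B`-values of the 2DistinctSCS instance with symbols `u k, v k` of the string
`s_k`: `-1` at keys `5k`, `-2` at keys `5k+1`, and `u k, v k, u k` at the keys
`5k-3, 5k-2, 5k-1` respectively. -/
noncomputable def scsBT (n : ℕ) (u v : ℕ → ℤ) : Fin (5 * n + 2) → ℝ :=
  fun j =>
    if (j : ℕ) % 5 = 0 then -1
    else if (j : ℕ) % 5 = 1 then -2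
    else if (j : ℕ) % 5 = 3 then (v ((j : ℕ) / 5 + 1) : ℝ)
    else (u ((j : ℕ) / 5 + 1) : ℝ)

/-- The cost of a diff under `F(U,←)` with per-operation cost `κ₀ + κ₁·r`, where `r` is
the number of ranges in the operation's condition. -/
def diffCostUnionAsg (κ₀ κ₁ : ℕ) (L : List OpUnionAsg) : ℕ :=
  (L.map fun f => κ₀ + κ₁ * f.ranges.length).sum

/-- `L` is a best diff from `βS` to `βT` under `F(U,←)` with the given cost parameters. -/
def IsBestDiffUnionAsg {K : Type*} (κ₀ κ₁ : ℕ) (α : K → ℤ) (L : List OpUnionAsg)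
    (βS βT : K → ℝ) : Prop :=
  IsDiffUnionAsg α L βS βT ∧
    ∀ L' : List OpUnionAsg, IsDiffUnionAsg α L' βS βT →
      diffCostUnionAsg κ₀ κ₁ L ≤ diffCostUnionAsg κ₀ κ₁ L'

theorem List.pair_sublist_iff {α : Type*} {a b : α} {w : List α} :
    [a, b].Sublist w ↔ ∃ i j : ℕ, i < j ∧ w[i]? = some a ∧ w[j]? = some b := by
  rw [show [a, b] = [a] ++ [b] from rfl, List.append_sublist_iff]
  constructor
  · rintro ⟨r₁, r₂, rfl, ha, hb⟩
    obtain ⟨i, hi⟩ := List.mem_iff_getElem?.1 (List.singleton_sublist.1 ha)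
    obtain ⟨j, hj⟩ := List.mem_iff_getElem?.1 (List.singleton_sublist.1 hb)
    have hi' : i < r₁.length := (List.getElem?_eq_some_iff.1 hi).1
    refine ⟨i, r₁.length + j, by omega, ?_, ?_⟩
    · rwa [List.getElem?_append_left hi']
    · rwa [List.getElem?_append_right (by omega), Nat.add_sub_cancel_left]
  · rintro ⟨i, j, hij, ha, hb⟩
    refine ⟨w.take j, w.drop j, (List.take_append_drop j w).symm, ?_, ?_⟩
    · exact List.singleton_sublist.2
        (List.mem_iff_getElem?.2 ⟨i, by rwa [List.getElem?_take, if_pos hij]⟩)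
    · exact List.singleton_sublist.2 (List.mem_iff_getElem?.2 ⟨0, by rwa [List.getElem?_drop]⟩)

theorem le_and_le_of_add_mul_le {ℓ R m t c : ℕ} (hc : t < c) (hR : m ≤ R)
    (h : ℓ + c * R ≤ t + m * c) : ℓ ≤ t ∧ R ≤ m := by
  obtain ⟨e, rfl⟩ := Nat.exists_eq_add_of_le hR
  rcases Nat.eq_zero_or_pos e with rfl | he
  · constructor <;> nlinarith
  · nlinarith

namespace OpUnionAsg

variable {K : Type*} (α : K → ℤ)

theorem applyOps_append (L₁ L₂ : List OpUnionAsg) (β : K → ℝ) :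
    applyOpsUnionAsg α (L₁ ++ L₂) β = applyOpsUnionAsg α L₂ (applyOpsUnionAsg α L₁ β) :=
  List.foldl_append

theorem applyOps_cons (f : OpUnionAsg) (L : List OpUnionAsg) (β : K → ℝ) :
    applyOpsUnionAsg α (f :: L) β = applyOpsUnionAsg α L (f.apply α β) :=
  rfl

theorem applyOps_of_forall_not_cond {L : List OpUnionAsg} {k : K}
    (h : ∀ f ∈ L, ¬ f.cond (α k)) (β : K → ℝ) : applyOpsUnionAsg α L β k = β k := by
  induction L generalizing β with
  | nil => rfl
  | cons f L ih =>
    rw [applyOps_cons, ih (fun g hg => h g (List.mem_cons_of_mem _ hg))]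
    simp [OpUnionAsg.apply, h f List.mem_cons_self]

def IsLastCover (L : List OpUnionAsg) (a : ℤ) (i : Fin L.length) : Prop :=
  L[i].cond a ∧ ∀ j : Fin L.length, i < j → ¬ L[j].cond a

theorem exists_isLastCover {L : List OpUnionAsg} {a : ℤ} (h : ∃ f ∈ L, f.cond a) :
    ∃ i, IsLastCover L a i := by
  obtain ⟨f, hf, ha⟩ := h
  obtain ⟨i, rfl⟩ := List.mem_iff_get.1 hf
  let S : Finset (Fin L.length) := Finset.univ.filter fun j => L[j].cond a
  have hS : S.Nonempty := ⟨i, by simpa [S] using ha⟩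
  refine ⟨S.max' hS, (Finset.mem_filter.1 (S.max'_mem hS)).2, fun j hj hja => ?_⟩
  exact absurd (S.le_max' j (by simpa [S] using hja)) (not_le.2 hj)

theorem applyOps_of_isLastCover {L : List OpUnionAsg} {k : K} {i : Fin L.length}
    (h : IsLastCover L (α k) i) (β : K → ℝ) : applyOpsUnionAsg α L β k = L[i].b := by
  conv_lhs => rw [← List.take_append_drop i L, List.drop_eq_getElem_cons i.2]
  rw [applyOps_append, applyOps_cons, applyOps_of_forall_not_cond]
  · simp [OpUnionAsg.apply, show L[(i : ℕ)].cond (α k) from h.1]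
  · intro g hg
    obtain ⟨m, hm, rfl⟩ := List.mem_iff_getElem.1 hg
    simp only [List.length_drop] at hm
    rw [List.getElem_drop]
    exact h.2 ⟨_, by omega⟩ (Fin.lt_def.2 (by dsimp only; omega))

theorem applyOps_eq_applyOps_of_cond {L : List OpUnionAsg} {k₁ k₂ : K} (hα : α k₁ = α k₂)
    (h : ∃ f ∈ L, f.cond (α k₁)) (β : K → ℝ) :
    applyOpsUnionAsg α L β k₁ = applyOpsUnionAsg α L β k₂ := by
  obtain ⟨i, hi⟩ := exists_isLastCover h
  rw [applyOps_of_isLastCover α hi, applyOps_of_isLastCover α (hα ▸ hi)]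

theorem exists_isLastCover_of_applyOps_ne {L : List OpUnionAsg} {β : K → ℝ} {k : K}
    (h : applyOpsUnionAsg α L β k ≠ β k) :
    ∃ i, IsLastCover L (α k) i ∧ L[i].b = applyOpsUnionAsg α L β k := by
  have hcov : ∃ f ∈ L, f.cond (α k) := by
    by_contra! hnone
    exact h (applyOps_of_forall_not_cond α hnone β)
  obtain ⟨i, hi⟩ := exists_isLastCover hcov
  exact ⟨i, hi, (applyOps_of_isLastCover α hi β).symm⟩

theorem exists_isBestDiff_le (κ₀ κ₁ : ℕ) {L : List OpUnionAsg} {βS βT : K → ℝ}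
    (hL : IsDiffUnionAsg α L βS βT) :
    ∃ L', IsBestDiffUnionAsg κ₀ κ₁ α L' βS βT ∧
      diffCostUnionAsg κ₀ κ₁ L' ≤ diffCostUnionAsg κ₀ κ₁ L := by
  let diffs := {L' | IsDiffUnionAsg α L' βS βT}
  have hne : diffs.Nonempty := ⟨L, hL⟩
  exact ⟨Function.argminOn (diffCostUnionAsg κ₀ κ₁) diffs hne,
    ⟨Function.argminOn_mem _ _ hne, fun L' hL' => Function.argminOn_le _ diffs hL'⟩,
    Function.argminOn_le _ diffs hL⟩

def numRanges (L : List OpUnionAsg) : ℕ :=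
  (L.map fun f => f.ranges.length).sum

theorem diffCost_eq (κ₀ κ₁ : ℕ) (L : List OpUnionAsg) :
    diffCostUnionAsg κ₀ κ₁ L = κ₀ * L.length + κ₁ * numRanges L := by
  induction L with
  | nil => simp [diffCostUnionAsg, numRanges]
  | cons f L ih =>
    simp only [diffCostUnionAsg, numRanges, List.map_cons, List.sum_cons, List.length_cons] at *
    rw [ih]
    ring

abbrev Slot (L : List OpUnionAsg) : Type := Σ i : Fin L.length, Fin L[i].ranges.length

def Slot.range {L : List OpUnionAsg} (s : Slot L) : ℝ × ℝ :=
  L[s.1].ranges[s.2]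

theorem card_slot (L : List OpUnionAsg) : Fintype.card (Slot L) = numRanges L := by
  simp only [Fintype.card_sigma, Fintype.card_fin, numRanges]
  exact Fin.sum_univ_fun_getElem L fun f => f.ranges.length

theorem exists_slot_of_cond {L : List OpUnionAsg} {i : Fin L.length} {a : ℤ}
    (h : L[i].cond a) : ∃ s : Slot L, s.1 = i ∧ (a : ℝ) ∈ Set.Icc s.range.1 s.range.2 := by
  obtain ⟨p, hp, hap⟩ := h
  obtain ⟨j, rfl⟩ := List.mem_iff_get.1 hp
  exact ⟨⟨i, j⟩, rfl, hap⟩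

theorem cond_of_slot {L : List OpUnionAsg} (s : Slot L) {a : ℤ}
    (h : (a : ℝ) ∈ Set.Icc s.range.1 s.range.2) : L[s.1].cond a :=
  ⟨s.range, List.getElem_mem _, h⟩

def TouchesBlock (p : ℝ × ℝ) (k : ℕ) : Prop :=
  ∃ a : ℤ, 4 * k + 1 ≤ a ∧ a ≤ 4 * k + 3 ∧ (a : ℝ) ∈ Set.Icc p.1 p.2

theorem TouchesBlock.four_mul_succ_mem {p : ℝ × ℝ} {k k' : ℕ} (h : TouchesBlock p k)
    (h' : TouchesBlock p k') (hk : k < k') :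
    (((4 * (k + 1) : ℕ) : ℤ) : ℝ) ∈ Set.Icc p.1 p.2 := by
  obtain ⟨a, -, ha, hap⟩ := h
  obtain ⟨a', ha', -, hap'⟩ := h'
  exact Set.ordConnected_Icc.out hap hap'
    ⟨by push_cast; exact_mod_cast (by omega : a ≤ 4 * (k + 1)),
      by push_cast; exact_mod_cast (by omega : 4 * (k + 1) ≤ a')⟩

noncomputable def blockSlots (L : List OpUnionAsg) (k : ℕ) : Finset (Slot L) :=
  Finset.univ.filter fun s => TouchesBlock s.range k

theorem sum_card_blockSlots_le {L : List OpUnionAsg} {n : ℕ}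
    (hsep : ∀ f ∈ L, ∀ m ≤ n, ¬ f.cond (4 * m)) :
    ∑ k ∈ Finset.range n, (blockSlots L k).card ≤ numRanges L := by
  rw [← card_slot, ← Finset.card_biUnion]
  · exact Finset.card_le_univ _
  intro k hk k' hk' hne
  simp only [Finset.coe_range, Set.mem_Iio] at hk hk'
  refine Finset.disjoint_filter.2 fun s _ hs hs' => ?_
  rcases Nat.lt_or_gt_of_ne hne with hlt | hlt
  · exact hsep _ (List.getElem_mem _) (k + 1) (by omega)
      ⟨s.range, List.getElem_mem _, by exact_mod_cast hs.four_mul_succ_mem hs' hlt⟩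
  · exact hsep _ (List.getElem_mem _) (k' + 1) (by omega)
      ⟨s.range, List.getElem_mem _, by exact_mod_cast hs'.four_mul_succ_mem hs hlt⟩

theorem exists_mem_blockSlots {L : List OpUnionAsg} {i : Fin L.length} {a : ℤ} {k : ℕ}
    (h : L[i].cond a) (ha₁ : 4 * k + 1 ≤ a) (ha₂ : a ≤ 4 * k + 3) :
    ∃ s ∈ blockSlots L k, s.1 = i ∧ (a : ℝ) ∈ Set.Icc s.range.1 s.range.2 := by
  obtain ⟨s, rfl, hs⟩ := exists_slot_of_cond h
  exact ⟨s, Finset.mem_filter.2 ⟨Finset.mem_univ _, a, ha₁, ha₂, hs⟩, rfl, hs⟩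

theorem one_lt_card_blockSlots {L : List OpUnionAsg} {i₁ i₂ : Fin L.length} {k : ℕ}
    (h₁ : L[i₁].cond (4 * k + 1)) (h₂ : L[i₂].cond (4 * k + 2)) (hne : i₁ ≠ i₂) :
    1 < (blockSlots L k).card := by
  obtain ⟨s₁, hs₁, rfl, -⟩ := exists_mem_blockSlots (k := k) h₁ le_rfl (by omega)
  obtain ⟨s₂, hs₂, rfl, -⟩ := exists_mem_blockSlots (k := k) h₂ (by omega) (by omega)
  exact Finset.one_lt_card.2 ⟨s₁, hs₁, s₂, hs₂, fun h => hne (congrArg Sigma.fst h)⟩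

theorem lt_of_card_blockSlots_le_two {L : List OpUnionAsg} {i₁ i₂ i₃ : Fin L.length} {k : ℕ}
    (h₁ : L[i₁].cond (4 * k + 1)) (h₂ : IsLastCover L (4 * k + 2) i₂)
    (h₃ : L[i₃].cond (4 * k + 3)) (h₁₂ : i₁ ≠ i₂) (h₃₂ : i₃ ≠ i₂)
    (hcard : (blockSlots L k).card ≤ 2) : i₁ < i₂ := by
  obtain ⟨s₁, hs₁, rfl, hs₁a⟩ := exists_mem_blockSlots (k := k) h₁ le_rfl (by omega)
  obtain ⟨s₂, hs₂, rfl, -⟩ := exists_mem_blockSlots (k := k) h₂.1 (by omega) (by omega)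
  obtain ⟨s₃, hs₃, rfl, hs₃a⟩ := exists_mem_blockSlots (k := k) h₃ (by omega) le_rfl
  have hs₃₁ : s₃ = s₁ := by
    by_contra hne
    refine absurd hcard
      (not_le.2 (Finset.two_lt_card.2 ⟨s₁, hs₁, s₂, hs₂, s₃, hs₃, ?_, ?_, ?_⟩))
    · exact fun h => h₁₂ (congrArg Sigma.fst h)
    · exact Ne.symm hne
    · exact fun h => h₃₂ (congrArg Sigma.fst h).symm
  subst hs₃₁
  have hmid : L[s₃.1].cond (4 * k + 2) := cond_of_slot s₃
    (Set.ordConnected_Icc.out hs₁a hs₃a ⟨by push_cast; linarith, by push_cast; linarith⟩)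
  exact lt_of_le_of_ne (not_lt.1 fun h => h₂.2 _ h hmid) h₁₂

end OpUnionAsg

section Instance

open OpUnionAsg

variable {n : ℕ} {u v : ℕ → ℤ}

/-- `r - 1` truncates to `0` at the separator keys `r ≤ 1`. -/
theorem scsAlpha_mk {k r : ℕ} (hr : r < 5) (h : 5 * k + r < 5 * n + 2) :
    scsAlpha n ⟨5 * k + r, h⟩ = 4 * k + (r - 1 : ℕ) := by
  have hdiv : (5 * k + r) / 5 = k := by omega
  have hmod : (5 * k + r) % 5 = r := by omega
  simp only [scsAlpha, hdiv, hmod]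
  split_ifs <;> push_cast <;> omega

theorem scsBS_mk {k r : ℕ} (hr : r < 5) (h : 5 * k + r < 5 * n + 2) :
    scsBS n ⟨5 * k + r, h⟩ = if r = 0 then -1 else if r = 1 then -2 else 0 := by
  have hmod : (5 * k + r) % 5 = r := by omega
  simp only [scsBS, hmod]

theorem scsBT_mk {k r : ℕ} (hr : r < 5) (h : 5 * k + r < 5 * n + 2) :
    scsBT n u v ⟨5 * k + r, h⟩ =
      if r = 0 then -1 else if r = 1 then -2 else if r = 3 then (v (k + 1) : ℝ)
      else (u (k + 1) : ℝ) := by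
  have hdiv : (5 * k + r) / 5 = k := by omega
  have hmod : (5 * k + r) % 5 = r := by omega
  simp only [scsBT, hdiv, hmod]

theorem exists_eq_mk_five_mul_add (j : Fin (5 * n + 2)) :
    ∃ k r, r < 5 ∧ ∃ h : 5 * k + r < 5 * n + 2, j = ⟨5 * k + r, h⟩ :=
  ⟨j / 5, j % 5, Nat.mod_lt _ (by norm_num), by omega, Fin.ext (by dsimp only; omega)⟩

variable {L : List OpUnionAsg}

theorem not_cond_four_mul_of_isDiff
    (hL : IsDiffUnionAsg (scsAlpha n) L (scsBS n) (scsBT n u v)) :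
    ∀ f ∈ L, ∀ m ≤ n, ¬ f.cond (4 * m) := by
  intro f hf m hm hcond
  have h₀ : scsAlpha n ⟨5 * m + 0, by omega⟩ = 4 * m := by
    rw [scsAlpha_mk (by norm_num)]; simp
  have h₁ : scsAlpha n ⟨5 * m + 1, by omega⟩ = 4 * m := by
    rw [scsAlpha_mk (by norm_num)]; simp
  have heq := applyOps_eq_applyOps_of_cond (scsAlpha n) (h₀.trans h₁.symm)
    ⟨f, hf, h₀ ▸ hcond⟩ (scsBS n)
  rw [hL, scsBT_mk (by norm_num), scsBT_mk (by norm_num)] at heq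
  norm_num at heq

theorem exists_isLastCover_of_isDiff
    (hL : IsDiffUnionAsg (scsAlpha n) L (scsBS n) (scsBT n u v)) {k r : ℕ} (hk : k < n)
    (hr : 2 ≤ r) (hr₅ : r < 5) (hne : scsBT n u v ⟨5 * k + r, by omega⟩ ≠ 0) :
    ∃ i, IsLastCover L (4 * k + (r - 1 : ℕ)) i ∧
      L[i].b = scsBT n u v ⟨5 * k + r, by omega⟩ := by
  have hS : scsBS n ⟨5 * k + r, by omega⟩ = 0 := by
    rw [scsBS_mk hr₅]; simp only [show r ≠ 0 by omega, show r ≠ 1 by omega, if_false]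
  rw [← hS, ← hL] at hne
  rw [← hL, ← scsAlpha_mk hr₅]
  exact exists_isLastCover_of_applyOps_ne _ hne

theorem exists_isLastCover_block (hL : IsDiffUnionAsg (scsAlpha n) L (scsBS n) (scsBT n u v))
    {k : ℕ} (hk : k < n) (hu : u (k + 1) ≠ 0) (hv : v (k + 1) ≠ 0) :
    ∃ i₁ i₂ i₃ : Fin L.length,
      (IsLastCover L (4 * k + 1) i₁ ∧ L[i₁].b = u (k + 1)) ∧
      (IsLastCover L (4 * k + 2) i₂ ∧ L[i₂].b = v (k + 1)) ∧
      (IsLastCover L (4 * k + 3) i₃ ∧ L[i₃].b = u (k + 1)) := by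
  obtain ⟨i₁, h₁, hb₁⟩ := exists_isLastCover_of_isDiff hL hk (r := 2) le_rfl (by norm_num)
    (by rw [scsBT_mk (by norm_num)]; simpa using hu)
  obtain ⟨i₂, h₂, hb₂⟩ := exists_isLastCover_of_isDiff hL hk (r := 3) (by norm_num) (by norm_num)
    (by rw [scsBT_mk (by norm_num)]; simpa using hv)
  obtain ⟨i₃, h₃, hb₃⟩ := exists_isLastCover_of_isDiff hL hk (r := 4) (by norm_num) (by norm_num)
    (by rw [scsBT_mk (by norm_num)]; simpa using hu)
  rw [scsBT_mk (by norm_num)] at hb₁ hb₂ hb₃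
  norm_num at h₁ h₂ h₃ hb₁ hb₂ hb₃
  exact ⟨i₁, i₂, i₃, ⟨h₁, hb₁⟩, ⟨h₂, hb₂⟩, ⟨h₃, hb₃⟩⟩

theorem one_lt_card_blockSlots_of_isDiff
    (hL : IsDiffUnionAsg (scsAlpha n) L (scsBS n) (scsBT n u v)) {k : ℕ} (hk : k < n)
    (hu : u (k + 1) ≠ 0) (hv : v (k + 1) ≠ 0) (huv : u (k + 1) ≠ v (k + 1)) :
    1 < (blockSlots L k).card := by
  obtain ⟨i₁, i₂, -, ⟨h₁, hb₁⟩, ⟨h₂, hb₂⟩, -⟩ := exists_isLastCover_block hL hk hu hv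
  refine one_lt_card_blockSlots h₁.1 h₂.1 fun h => huv ?_
  subst h
  exact_mod_cast hb₁.symm.trans hb₂

theorem exists_lt_of_card_blockSlots_le_two
    (hL : IsDiffUnionAsg (scsAlpha n) L (scsBS n) (scsBT n u v)) {k : ℕ} (hk : k < n)
    (hu : u (k + 1) ≠ 0) (hv : v (k + 1) ≠ 0) (huv : u (k + 1) ≠ v (k + 1))
    (hcard : (blockSlots L k).card ≤ 2) :
    ∃ i₁ i₂ : Fin L.length, i₁ < i₂ ∧ L[i₁].b = u (k + 1) ∧ L[i₂].b = v (k + 1) := by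
  obtain ⟨i₁, i₂, i₃, ⟨h₁, hb₁⟩, ⟨h₂, hb₂⟩, ⟨h₃, hb₃⟩⟩ := exists_isLastCover_block hL hk hu hv
  have hne : ∀ i j : Fin L.length, L[i].b = u (k + 1) → L[j].b = v (k + 1) → i ≠ j := by
    rintro i j hi hj rfl
    exact huv (by exact_mod_cast hi.symm.trans hj)
  exact ⟨i₁, i₂, lt_of_card_blockSlots_le_two h₁.1 h₂ h₃.1 (hne _ _ hb₁ hb₂) (hne _ _ hb₃ hb₂)
    hcard, hb₁, hb₂⟩

theorem exists_supersequence_of_isDiff {t : ℕ}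
    (hL : IsDiffUnionAsg (scsAlpha n) L (scsBS n) (scsBT n u v))
    (hu : ∀ k, 1 ≤ k → k ≤ n → u k ≠ 0) (hv : ∀ k, 1 ≤ k → k ≤ n → v k ≠ 0)
    (huv : ∀ k, 1 ≤ k → k ≤ n → u k ≠ v k)
    (hcost : diffCostUnionAsg 1 (t + 99) L ≤ t + 2 * n * (t + 99)) :
    ∃ w : List ℤ, w.length ≤ t ∧ ∀ k, 1 ≤ k → k ≤ n → [u k, v k].Sublist w := by
  have htwo : ∀ k ∈ Finset.range n, 2 ≤ (blockSlots L k).card := fun k hk => by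
    rw [Finset.mem_range] at hk
    exact one_lt_card_blockSlots_of_isDiff hL hk (hu _ (by omega) (by omega))
      (hv _ (by omega) (by omega)) (huv _ (by omega) (by omega))
  have hsum := sum_card_blockSlots_le (not_cond_four_mul_of_isDiff hL)
  have h2n : ∑ _k ∈ Finset.range n, 2 = 2 * n := by simp [mul_comm]
  rw [diffCost_eq, one_mul] at hcost
  obtain ⟨hlen, hR⟩ := le_and_le_of_add_mul_le (c := t + 99) (by omega)
    (h2n ▸ (Finset.sum_le_sum htwo).trans hsum) hcost
  have hcard : ∀ k ∈ Finset.range n, 2 = (blockSlots L k).card :=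
    (Finset.sum_eq_sum_iff_of_le htwo).1 (le_antisymm (Finset.sum_le_sum htwo) (by omega))
  refine ⟨L.map fun f => round f.b, by simpa using hlen, fun k hk₁ hkn => ?_⟩
  obtain ⟨k, rfl⟩ := Nat.exists_eq_add_of_le' hk₁
  obtain ⟨i₁, i₂, hlt, hb₁, hb₂⟩ := exists_lt_of_card_blockSlots_le_two hL (by omega)
    (hu _ hk₁ hkn) (hv _ hk₁ hkn) (huv _ hk₁ hkn) (hcard k (Finset.mem_range.2 (by omega))).ge
  have hw : ∀ i : Fin L.length, (L.map fun f => round f.b)[(i : ℕ)]? = some (round L[i].b) :=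
    fun i => by simp
  exact List.pair_sublist_iff.2 ⟨i₁, i₂, hlt, by rw [hw, hb₁, round_intCast],
    by rw [hw, hb₂, round_intCast]⟩

end Instance

section Construction

open OpUnionAsg

variable {n : ℕ} {p q : ℕ → ℕ} {w : List ℤ}

/-- `p k < q k` are positions of `u (k+1)` and `v (k+1)` in the supersequence `w`. -/
noncomputable def supersequenceOp (n : ℕ) (p q : ℕ → ℕ) (w : List ℤ) (i : ℕ) : OpUnionAsg where
  ranges :=
    ({k ∈ Finset.range n | p k = i}.toList.map fun k : ℕ =>
      (((4 * k + 1 : ℤ) : ℝ), ((4 * k + 3 : ℤ) : ℝ))) ++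
    ({k ∈ Finset.range n | q k = i}.toList.map fun k : ℕ =>
      (((4 * k + 2 : ℤ) : ℝ), ((4 * k + 2 : ℤ) : ℝ)))
  b := w.getD i 0

noncomputable def supersequenceDiff (n : ℕ) (p q : ℕ → ℕ) (w : List ℤ) : List OpUnionAsg :=
  List.ofFn fun i : Fin w.length => supersequenceOp n p q w i

theorem supersequenceOp_cond_iff {i : ℕ} {a : ℤ} :
    (supersequenceOp n p q w i).cond a ↔
      (∃ k < n, p k = i ∧ 4 * k + 1 ≤ a ∧ a ≤ 4 * k + 3) ∨
        (∃ k < n, q k = i ∧ a = 4 * k + 2) := by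
  simp only [OpUnionAsg.cond, supersequenceOp, List.mem_append, List.mem_map, Finset.mem_toList,
    Finset.mem_filter, Finset.mem_range, or_and_right, exists_or, exists_exists_and_eq_and,
    Int.cast_le]
  simp only [and_assoc, ← le_antisymm_iff, eq_comm]

theorem supersequenceOp_cond_block_iff {i k s : ℕ} (hk : k < n) (hs₁ : 1 ≤ s) (hs₃ : s ≤ 3) :
    (supersequenceOp n p q w i).cond (4 * k + s) ↔ p k = i ∨ (s = 2 ∧ q k = i) := by
  rw [supersequenceOp_cond_iff]
  constructor
  · rintro (⟨k', -, rfl, h₁, h₃⟩ | ⟨k', -, rfl, h₂⟩)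
    · obtain rfl : k' = k := by omega
      exact Or.inl rfl
    · obtain rfl : k' = k := by omega
      exact Or.inr ⟨by omega, rfl⟩
  · rintro (rfl | ⟨rfl, rfl⟩)
    · exact Or.inl ⟨k, hk, rfl, by omega, by omega⟩
    · exact Or.inr ⟨k, hk, rfl, by omega⟩

theorem not_supersequenceOp_cond_four_mul {i m : ℕ} :
    ¬ (supersequenceOp n p q w i).cond (4 * m) := by
  rw [supersequenceOp_cond_iff]
  rintro (⟨k, -, -, h₁, h₃⟩ | ⟨k, -, -, h₂⟩) <;> omega

theorem numRanges_supersequenceDiff (hp : ∀ k < n, p k < w.length)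
    (hq : ∀ k < n, q k < w.length) : numRanges (supersequenceDiff n p q w) = 2 * n := by
  have hfib : ∀ r : ℕ → ℕ, (∀ k < n, r k < w.length) →
      ∑ i ∈ Finset.range w.length, {k ∈ Finset.range n | r k = i}.card = n := fun r hr => by
    rw [← Finset.card_eq_sum_card_fiberwise fun k hk => by simpa using hr k (by simpa using hk),
      Finset.card_range]
  simp only [numRanges, supersequenceDiff, List.map_ofFn, List.sum_ofFn, Function.comp_apply,
    supersequenceOp, List.length_append, List.length_map, Finset.length_toList]
  rw [Fin.sum_univ_eq_sum_range (fun i => {k ∈ Finset.range n | p k = i}.card +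
    {k ∈ Finset.range n | q k = i}.card), Finset.sum_add_distrib, hfib p hp, hfib q hq, two_mul]

theorem supersequenceDiff_getElem {i : ℕ} (hi : i < (supersequenceDiff n p q w).length) :
    (supersequenceDiff n p q w)[i] = supersequenceOp n p q w i := by
  simp [supersequenceDiff]

theorem isDiff_supersequenceDiff {u v : ℕ → ℤ}
    (hpq : ∀ k < n, p k < q k ∧ w[p k]? = some (u (k + 1)) ∧ w[q k]? = some (v (k + 1))) :
    IsDiffUnionAsg (scsAlpha n) (supersequenceDiff n p q w) (scsBS n) (scsBT n u v) := by
  funext j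
  obtain ⟨k, r, hr, hj, rfl⟩ := exists_eq_mk_five_mul_add j
  rcases Nat.lt_or_ge r 2 with hr₂ | hr₂
  · rw [applyOps_of_forall_not_cond, scsBS_mk hr, scsBT_mk hr]
    · split_ifs <;> first | rfl | omega
    · intro f hf
      obtain ⟨i, rfl⟩ := List.mem_ofFn.1 hf
      rw [scsAlpha_mk hr, show r - 1 = 0 by omega, Nat.cast_zero, add_zero]
      exact not_supersequenceOp_cond_four_mul
  · have hk : k < n := by omega
    obtain ⟨hlt, hpw, hqw⟩ := hpq k hk
    have hlen : ∀ {i : ℕ} {x : ℤ}, w[i]? = some x → i < (supersequenceDiff n p q w).length :=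
      fun h => by simpa [supersequenceDiff] using (List.getElem?_eq_some_iff.1 h).1
    let i : ℕ := if r = 3 then q k else p k
    have hi : i < (supersequenceDiff n p q w).length := by
      simp only [i]
      split_ifs
      exacts [hlen hqw, hlen hpw]
    have hlast :
        IsLastCover (supersequenceDiff n p q w) (scsAlpha n ⟨5 * k + r, hj⟩) ⟨i, hi⟩ := by
      rw [scsAlpha_mk hr]
      refine ⟨?_, fun j hij => ?_⟩
      · rw [Fin.getElem_fin, supersequenceDiff_getElem,
          supersequenceOp_cond_block_iff hk (by omega) (by omega)]
        simp only [i]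
        split_ifs <;> omega
      · rw [Fin.getElem_fin, supersequenceDiff_getElem,
          supersequenceOp_cond_block_iff hk (by omega) (by omega)]
        rw [Fin.lt_def] at hij
        simp only [i] at hij
        split_ifs at hij <;> omega
    rw [applyOps_of_isLastCover _ hlast, scsBT_mk hr, Fin.getElem_fin, supersequenceDiff_getElem]
    simp only [i, supersequenceOp]
    split_ifs <;> simp_all [List.getD_eq_getElem?_getD]

end Construction

theorem exists_isDiff_of_supersequence {n : ℕ} {u v : ℕ → ℤ} {w : List ℤ}
    (hsub : ∀ k, 1 ≤ k → k ≤ n → [u k, v k].Sublist w) :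
    ∃ L, IsDiffUnionAsg (scsAlpha n) L (scsBS n) (scsBT n u v) ∧ L.length = w.length ∧
      OpUnionAsg.numRanges L = 2 * n := by
  have hpos : ∀ k, ∃ i j : ℕ,
      k < n → i < j ∧ w[i]? = some (u (k + 1)) ∧ w[j]? = some (v (k + 1)) := fun k => by
    by_cases hk : k < n
    · obtain ⟨i, j, h⟩ := List.pair_sublist_iff.1 (hsub (k + 1) (by omega) (by omega))
      exact ⟨i, j, fun _ => h⟩
    · exact ⟨0, 0, fun h => absurd h hk⟩
  choose p q hpq using hpos
  have hlt : ∀ {i : ℕ} {x : ℤ}, w[i]? = some x → i < w.length :=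
    fun h => (List.getElem?_eq_some_iff.1 h).1
  exact ⟨supersequenceDiff n p q w, isDiff_supersequenceDiff hpq, by simp [supersequenceDiff],
    numRanges_supersequenceDiff (fun k hk => hlt (hpq k hk).2.1) (fun k hk => hlt (hpq k hk).2.2)⟩

/-- In the 2DistinctSCS instance, the strings `s_1, …, s_n` (where `s_k = u_k v_k`) have a
common supersequence of length at most `t` if and only if the best diff from the source
`B`-values to the target `B`-values under `F(U,←)`, with operation cost `κ₀ + κ₁·r` for
`κ₀ = 1` and `κ₁ = t + 99`, has cost at most `t + 2n(t+99)`. -/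
theorem scs_supersequence_iff_best_diff_cost (n : ℕ) (u v : ℕ → ℤ)
    (hu : ∀ k, 1 ≤ k → k ≤ n → 0 < u k) (hv : ∀ k, 1 ≤ k → k ≤ n → 0 < v k)
    (huv : ∀ k, 1 ≤ k → k ≤ n → u k ≠ v k) (t : ℕ) :
    (∃ w : List ℤ, w.length ≤ t ∧ ∀ k, 1 ≤ k → k ≤ n → [u k, v k].Sublist w) ↔
      ∃ L : List OpUnionAsg,
        IsBestDiffUnionAsg 1 (t + 99) (scsAlpha n) L (scsBS n) (scsBT n u v) ∧
        diffCostUnionAsg 1 (t + 99) L ≤ t + 2 * n * (t + 99) := by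
  constructor
  · rintro ⟨w, hw, hsub⟩
    obtain ⟨L, hL, hlen, hR⟩ := exists_isDiff_of_supersequence hsub
    obtain ⟨L', hbest, hle⟩ := OpUnionAsg.exists_isBestDiff_le _ 1 (t + 99) hL
    refine ⟨L', hbest, hle.trans ?_⟩
    rw [OpUnionAsg.diffCost_eq, hlen, hR]
    nlinarith
  · rintro ⟨L, hbest, hcost⟩
    exact exists_supersequence_of_isDiff hbest.1 (fun k h₁ h₂ => (hu k h₁ h₂).ne')
      (fun k h₁ h₂ => (hv k h₁ h₂).ne') huv hcost
end

section
/- Let S be a finite set of strings of length two over an alphabet of symbols, let t be a nonnegative integer, and let C = {c : the string cc belongs to S}. For each c ∈ C introduce two fresh symbols c₁ and c₂ (distinct from all existing symbols and from each other), and define f_i(c) = c_i if c ∈ C and f_i(c) = c otherwise, for i ∈ {1,2}. Let S' = { f₁(u)f₂(v) : uv ∈ S }. Then S has a common supersequence of length at most t if and only if S' has a common supersequence of length at most t. (In particular, every string in S' consists of two distinct symbols.) -/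
/-!
A supersequence `w` of `S` is turned into one of `S'` of the same length by writing `c₂` at
the last occurrence in `w` of each `c` with `cc ∈ S` and `c₁` at all its other occurrences.
If `uv ∈ S` is embedded at positions `i < j` of `w`, the first occurrence of `u` lies at or
before `i` and is not its last one when `uu ∈ S` (since then `u` occurs twice in `w`), while
the last occurrence of `v` lies at or after `j`. Conversely, forgetting the tags maps a
supersequence of `S'` to one of `S`.
-/

/-- The relabeling map of the 2SCS → 2DistinctSCS reduction: for a symbol `c` with
`cc ∈ S`, the first (`i = false`) and second (`i = true`) occurrences are replaced by
fresh symbols `c₁ = Sum.inr (false, c)` and `c₂ = Sum.inr (true, c)`; other symbols are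
kept as `Sum.inl c`. -/
def distinctify {σ : Type*} [DecidableEq σ] (S : Finset (σ × σ)) (i : Bool) (c : σ) :
    σ ⊕ Bool × σ :=
  if (c, c) ∈ S then Sum.inr (i, c) else Sum.inl c

namespace List

variable {α β : Type*} [DecidableEq α]

def markLast (f : Bool → α → β) : List α → List β
  | [] => []
  | c :: w => f (decide (c ∉ w)) c :: markLast f w

variable {f : Bool → α → β}

@[simp]
theorem length_markLast : ∀ w : List α, (markLast f w).length = w.length
  | [] => rfl
  | c :: w => by simp [markLast, length_markLast w]

theorem mem_markLast_of_mem {v : α} : ∀ {w : List α}, v ∈ w → f true v ∈ markLast f w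
  | [], hv => absurd hv not_mem_nil
  | c :: w, hv => by
    by_cases hvw : v ∈ w
    · exact mem_cons_of_mem _ (mem_markLast_of_mem hvw)
    · obtain rfl : v = c := (mem_cons.1 hv).resolve_right hvw
      simp [markLast, hvw]

theorem sublist_markLast {u v : α} :
    ∀ {w : List α}, [u, v] <+ w → ([u, u] <+ w ∨ f false u = f true u) →
      [f false u, f true v] <+ markLast f w
  | [], huv, _ => absurd huv.length_le (by simp)
  | c :: w, huv, hu => by
    by_cases hcu : c = u
    · subst hcu
      have hv : v ∈ w := singleton_sublist.1 huv.tail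
      have hhead : f (decide (c ∉ w)) c = f false c := by
        rcases hu with hcc | hf
        · have hcw : c ∈ w := singleton_sublist.1 hcc.tail
          simp [hcw]
        · by_cases hcw : c ∈ w <;> simp [hcw, hf]
      rw [markLast, hhead]
      exact (singleton_sublist.2 (mem_markLast_of_mem hv)).cons_cons _
    · have hu' : [u, u] <+ w ∨ f false u = f true u :=
        hu.imp_left (Sublist.of_cons_of_ne (Ne.symm hcu))
      exact (sublist_markLast (huv.of_cons_of_ne (Ne.symm hcu)) hu').cons _

end List

section distinctify

variable {σ : Type*} [DecidableEq σ] (S : Finset (σ × σ))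

theorem distinctify_false_ne_true {a b : σ} (hab : (a, b) ∈ S) :
    distinctify S false a ≠ distinctify S true b := by
  intro h
  unfold distinctify at h
  split_ifs at h with ha <;> cases h
  exact ha hab

theorem distinctify_false_eq_true_of_not_mem {c : σ} (hc : (c, c) ∉ S) :
    distinctify S false c = distinctify S true c := by
  simp [distinctify, hc]

theorem elim_distinctify (i : Bool) (c : σ) :
    Sum.elim id Prod.snd (distinctify S i c) = c := by
  unfold distinctify
  split_ifs <;> rfl

end distinctify

/-- Let `S` be a finite set of length-two strings (pairs of symbols) and `t` a natural
number, and let `S' = { f₁(u) f₂(v) : uv ∈ S }` where `f₁, f₂` relabel the symbols `c`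
with `cc ∈ S` by fresh symbols `c₁, c₂`. Then every string of `S'` consists of two
distinct symbols, and `S` has a common supersequence of length at most `t` if and only if
`S'` has a common supersequence of length at most `t`. -/
theorem twoSCS_iff_twoDistinctSCS {σ : Type*} [DecidableEq σ] (S : Finset (σ × σ))
    (t : ℕ) :
    (∀ p ∈ S, distinctify S false p.1 ≠ distinctify S true p.2) ∧
      ((∃ w : List σ, w.length ≤ t ∧ ∀ p ∈ S, [p.1, p.2].Sublist w) ↔
        ∃ w' : List (σ ⊕ Bool × σ), w'.length ≤ t ∧
          ∀ p ∈ S, [distinctify S false p.1, distinctify S true p.2].Sublist w') := by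
  refine ⟨fun p hp => distinctify_false_ne_true S hp, ⟨?_, ?_⟩⟩
  · rintro ⟨w, hlen, hsub⟩
    refine ⟨w.markLast (distinctify S), by simpa using hlen, fun p hp => ?_⟩
    refine List.sublist_markLast (hsub p hp) ?_
    by_cases hu : (p.1, p.1) ∈ S
    · exact Or.inl (hsub _ hu)
    · exact Or.inr (distinctify_false_eq_true_of_not_mem S hu)
  · rintro ⟨w', hlen, hsub⟩
    refine ⟨w'.map (Sum.elim id Prod.snd), by simpa using hlen, fun p hp => ?_⟩
    simpa [elim_distinctify] using (hsub p hp).map (Sum.elim id Prod.snd)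
end

section
/- Let α : K → ℤ be fixed A-values on a finite key set K, and let β_S, β_T : K → ℤ. If there is a diff from β_S to β_T under the family F(≤≥,+) of cost m, then there is a diff from β_S to β_T of cost at most m+1 using only operations with at-most conditions, i.e., operations of the form (A ≤ a, B ← B + b). -/
open scoped Classical

/-- An operation of the family `F(≤≥,+)`: if `dir = true` the condition is `A ≤ a`,
otherwise the condition is `A ≥ a`; the modifier is the increment `B ← B + b`. -/
structure OpIneqAdd where
  dir : Bool
  a : ℝ
  b : ℝ

/-- The condition of an operation, evaluated on an `A`-value `v`. -/
def OpIneqAdd.cond (f : OpIneqAdd) (v : ℤ) : Prop :=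
  if f.dir then (v : ℝ) ≤ f.a else f.a ≤ (v : ℝ)

/-- Applying an operation: every key whose `A`-value satisfies the condition gets
its `B`-value incremented by `b`; other keys are unchanged. -/
noncomputable def OpIneqAdd.apply {K : Type*} (α : K → ℤ) (f : OpIneqAdd) (β : K → ℝ) :
    K → ℝ :=
  fun k => if f.cond (α k) then β k + f.b else β k

/-- Successive application of a finite sequence of operations. -/
noncomputable def applyOpsIneqAdd {K : Type*} (α : K → ℤ) (L : List OpIneqAdd) (β : K → ℝ) :
    K → ℝ :=
  L.foldl (fun β' f => f.apply α β') β

/-- `L` is a diff from `βS` to `βT` under `F(≤≥,+)`. -/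
def IsDiffIneqAdd {K : Type*} (α : K → ℤ) (L : List OpIneqAdd) (βS βT : K → ℝ) : Prop :=
  applyOpsIneqAdd α L βS = βT

/-- `L` is a best diff: a diff of minimum cost (the cost being the number of operations). -/
def IsBestDiffIneqAdd {K : Type*} (α : K → ℤ) (L : List OpIneqAdd) (βS βT : K → ℝ) : Prop :=
  IsDiffIneqAdd α L βS βT ∧
    ∀ L' : List OpIneqAdd, IsDiffIneqAdd α L' βS βT → L.length ≤ L'.length


noncomputable def trOp (f : OpIneqAdd) : OpIneqAdd :=
  if f.dir then f else ⟨true, ((⌈f.a⌉ - 1 : ℤ) : ℝ), -f.b⟩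

noncomputable def shiftOp (f : OpIneqAdd) : ℝ := if f.dir then 0 else f.b

lemma trOp_dir (f : OpIneqAdd) : (trOp f).dir = true := by
  unfold trOp; split <;> simp_all

lemma applyOps_cons {K : Type*} (α : K → ℤ) (f : OpIneqAdd) (L : List OpIneqAdd) (β : K → ℝ) :
    applyOpsIneqAdd α (f :: L) β = applyOpsIneqAdd α L (f.apply α β) := rfl

open Classical in
lemma apply_trOp {K : Type*} (α : K → ℤ) (f : OpIneqAdd) (β : K → ℝ) :
    (trOp f).apply α β = fun k => f.apply α β k - shiftOp f := by
  funext k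
  by_cases hd : f.dir
  · simp [trOp, shiftOp, hd]
  · have hiff : ((α k : ℝ) ≤ ((⌈f.a⌉ - 1 : ℤ) : ℝ)) ↔ ¬ (f.a ≤ (α k : ℝ)) := by
      rw [show ((((⌈f.a⌉:ℤ) - 1 : ℤ)) : ℝ) = ((((⌈f.a⌉ - 1 : ℤ)) : ℤ) : ℝ) from rfl,
        Int.cast_le, Int.le_sub_one_iff, Int.lt_ceil, not_le]
    rw [Bool.not_eq_true] at hd
    simp only [trOp, shiftOp, hd, Bool.false_eq_true, if_false, OpIneqAdd.apply,
      OpIneqAdd.cond, if_true]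
    by_cases hc : f.a ≤ (α k : ℝ)
    · rw [if_neg (fun hle => (hiff.mp hle) hc), if_pos hc]; ring
    · rw [if_pos (hiff.mpr hc), if_neg hc]; ring

lemma apply_const {K : Type*} (α : K → ℤ) (f : OpIneqAdd) (β : K → ℝ) (c : ℝ) :
    f.apply α (fun k => β k + c) = fun k => f.apply α β k + c := by
  funext k; unfold OpIneqAdd.apply; split <;> ring

lemma applyOps_const {K : Type*} (α : K → ℤ) (L : List OpIneqAdd) (β : K → ℝ) (c : ℝ) :
    applyOpsIneqAdd α L (fun k => β k + c) = fun k => applyOpsIneqAdd α L β k + c := by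
  induction L generalizing β with
  | nil => rfl
  | cons f L ih =>
      rw [applyOps_cons, applyOps_cons, apply_const, ih]

lemma applyOps_tr {K : Type*} (α : K → ℤ) (L : List OpIneqAdd) (β : K → ℝ) :
    applyOpsIneqAdd α (L.map trOp) β
      = fun k => applyOpsIneqAdd α L β k - (L.map shiftOp).sum := by
  induction L generalizing β with
  | nil => simp [applyOpsIneqAdd]
  | cons f L ih =>
      rw [List.map_cons, applyOps_cons, applyOps_cons, apply_trOp,
        show (fun k => f.apply α β k - shiftOp f)
          = fun k => f.apply α β k + (-shiftOp f) from funext fun k => by ring,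
        applyOps_const, ih]
      funext k
      simp [List.sum_cons]
      ring

lemma applyOps_append {K : Type*} (α : K → ℤ) (L₁ L₂ : List OpIneqAdd) (β : K → ℝ) :
    applyOpsIneqAdd α (L₁ ++ L₂) β = applyOpsIneqAdd α L₂ (applyOpsIneqAdd α L₁ β) := by
  simp [applyOpsIneqAdd, List.foldl_append]


/-- If there is a diff from `β_S` to `β_T` under `F(≤≥,+)` of cost `m`, then there is a
diff from `β_S` to `β_T` of cost at most `m + 1` using only operations with at-most
conditions, i.e., operations of the form `(A ≤ a, B ← B + b)`. -/
theorem exists_atMost_diff_of_ineq_diff {K : Type*} [Fintype K] (α : K → ℤ)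
    (βS βT : K → ℤ) (m : ℕ)
    (h : ∃ L : List OpIneqAdd,
      IsDiffIneqAdd α L (fun k => (βS k : ℝ)) (fun k => (βT k : ℝ)) ∧ L.length = m) :
    ∃ L' : List OpIneqAdd,
      IsDiffIneqAdd α L' (fun k => (βS k : ℝ)) (fun k => (βT k : ℝ)) ∧
      (∀ f ∈ L', f.dir = true) ∧ L'.length ≤ m + 1 := by
  obtain ⟨L, hL, hlen⟩ := h
  obtain ⟨a₀, ha₀⟩ := Finite.exists_le (fun k : K => (α k : ℝ))
  refine ⟨L.map trOp ++ [⟨true, a₀, (L.map shiftOp).sum⟩], ?_, ?_, ?_⟩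
  · rw [IsDiffIneqAdd] at hL ⊢
    rw [applyOps_append, applyOps_tr, hL]
    funext k
    simp only [applyOpsIneqAdd, List.foldl_cons, List.foldl_nil, OpIneqAdd.apply,
      OpIneqAdd.cond, if_true, if_pos (ha₀ k)]
    ring
  · intro f hf
    rcases List.mem_append.mp hf with hf | hf
    · obtain ⟨g, _, rfl⟩ := List.mem_map.mp hf
      exact trOp_dir g
    · simp only [List.mem_singleton] at hf
      subst hf; rfl
  · simp [hlen]
end

section
/- Let α : K → ℤ be fixed A-values on a finite key set K, and let β_S, β_T : K → ℤ. If there is a diff from β_S to β_T under the family F(R,+) of cost m, then there is a diff from β_S to β_T of cost at most 2m using only operations with at-most conditions and increment modifiers, i.e., operations of the form (A ≤ a, B ← B + b). -/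
/-!
An operation `(A ∈ [a, z], B ← B + b)` is the composite of `(A ≤ z, B ← B + b)` and
`(A ≤ ⌈a⌉ - 1, B ← B - b)`: keys with `A < a` receive both increments, which cancel, keys in
`[a, z]` only the first, keys above `z` neither. Since `A`-values are integers, `A < a` is the
at-most condition `A ≤ ⌈a⌉ - 1`. Replacing every operation of a diff by these two doubles its cost.
-/

open scoped Classical

/-- An operation of the family `F(R,+)`: reals `a ≤ z` and an increment `b`, with condition
`A ∈ [a, z]` and modifier `B ← B + b`. -/
structure OpRangeAdd where
  a : ℝ
  z : ℝ
  hle : a ≤ z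
  b : ℝ

/-- The condition of an operation of `F(R,+)`, evaluated on an `A`-value `v`. -/
def OpRangeAdd.cond (f : OpRangeAdd) (v : ℤ) : Prop :=
  f.a ≤ (v : ℝ) ∧ (v : ℝ) ≤ f.z

/-- Applying an operation of `F(R,+)`: every key whose `A`-value lies in `[a, z]` gets its
`B`-value incremented by `b`; other keys are unchanged. -/
noncomputable def OpRangeAdd.apply {K : Type*} (α : K → ℤ) (f : OpRangeAdd) (β : K → ℝ) :
    K → ℝ :=
  fun k => if f.cond (α k) then β k + f.b else β k

/-- Successive application of a finite sequence of operations of `F(R,+)`. -/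
noncomputable def applyOpsRangeAdd {K : Type*} (α : K → ℤ) (L : List OpRangeAdd)
    (β : K → ℝ) : K → ℝ :=
  L.foldl (fun β' f => f.apply α β') β

/-- `L` is a diff from `βS` to `βT` under `F(R,+)`. -/
def IsDiffRangeAdd {K : Type*} (α : K → ℤ) (L : List OpRangeAdd) (βS βT : K → ℝ) : Prop :=
  applyOpsRangeAdd α L βS = βT

/-- `L` is a best diff under `F(R,+)`: a diff of minimum cost (number of operations). -/
def IsBestDiffRangeAdd {K : Type*} (α : K → ℤ) (L : List OpRangeAdd) (βS βT : K → ℝ) :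
    Prop :=
  IsDiffRangeAdd α L βS βT ∧
    ∀ L' : List OpRangeAdd, IsDiffRangeAdd α L' βS βT → L.length ≤ L'.length

/-- An operation with an at-most condition and an increment modifier:
`(A ≤ a, B ← B + b)`. -/
structure OpLeqAdd where
  a : ℝ
  b : ℝ

/-- Applying an at-most/increment operation: every key `k` with `α k ≤ a` gets its
`B`-value incremented by `b`. -/
noncomputable def OpLeqAdd.apply {K : Type*} (α : K → ℤ) (f : OpLeqAdd) (β : K → ℝ) :
    K → ℝ :=
  fun k => if (α k : ℝ) ≤ f.a then β k + f.b else β k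

/-- Successive application of a finite sequence of at-most/increment operations. -/
noncomputable def applyOpsLeqAdd {K : Type*} (α : K → ℤ) (L : List OpLeqAdd) (β : K → ℝ) :
    K → ℝ :=
  L.foldl (fun β' f => f.apply α β') β

/-- `L` is a diff from `βS` to `βT` using only at-most/increment operations. -/
def IsDiffLeqAdd {K : Type*} (α : K → ℤ) (L : List OpLeqAdd) (βS βT : K → ℝ) : Prop :=
  applyOpsLeqAdd α L βS = βT

noncomputable def OpRangeAdd.toLeqAdd (f : OpRangeAdd) : List OpLeqAdd :=
  [⟨f.z, f.b⟩, ⟨((⌈f.a⌉ - 1 : ℤ) : ℝ), -f.b⟩]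

lemma Int.cast_le_ceil_sub_one_iff (n : ℤ) (a : ℝ) :
    (n : ℝ) ≤ ((⌈a⌉ - 1 : ℤ) : ℝ) ↔ (n : ℝ) < a := by
  rw [Int.cast_le, Int.le_sub_one_iff, Int.lt_ceil]

lemma applyOpsLeqAdd_append {K : Type*} (α : K → ℤ) (L₁ L₂ : List OpLeqAdd) (β : K → ℝ) :
    applyOpsLeqAdd α (L₁ ++ L₂) β = applyOpsLeqAdd α L₂ (applyOpsLeqAdd α L₁ β) :=
  List.foldl_append

lemma OpRangeAdd.applyOpsLeqAdd_toLeqAdd {K : Type*} (α : K → ℤ) (f : OpRangeAdd)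
    (β : K → ℝ) : applyOpsLeqAdd α f.toLeqAdd β = f.apply α β := by
  funext k
  simp only [applyOpsLeqAdd, toLeqAdd, List.foldl, OpLeqAdd.apply, OpRangeAdd.apply, cond,
    Int.cast_le_ceil_sub_one_iff]
  by_cases hz : (α k : ℝ) ≤ f.z <;> by_cases ha : (α k : ℝ) < f.a
  · simp [hz, ha, not_le.mpr ha]
  · simp [hz, ha, le_of_not_gt ha]
  · exact absurd (ha.trans_le f.hle).le hz
  · simp [hz, ha]

lemma applyOpsLeqAdd_flatMap_toLeqAdd {K : Type*} (α : K → ℤ) (L : List OpRangeAdd)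
    (β : K → ℝ) :
    applyOpsLeqAdd α (L.flatMap OpRangeAdd.toLeqAdd) β = applyOpsRangeAdd α L β := by
  induction L generalizing β with
  | nil => rfl
  | cons f L ih =>
    rw [List.flatMap_cons, applyOpsLeqAdd_append, f.applyOpsLeqAdd_toLeqAdd, ih]
    rfl

lemma length_flatMap_toLeqAdd (L : List OpRangeAdd) :
    (L.flatMap OpRangeAdd.toLeqAdd).length = 2 * L.length := by
  simp [List.length_flatMap, OpRangeAdd.toLeqAdd, mul_comm]

theorem exists_atMost_diff_of_range_diff_general {K : Type*} (α : K → ℤ)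
    (βS βT : K → ℤ) (m : ℕ)
    (h : ∃ L : List OpRangeAdd,
      IsDiffRangeAdd α L (fun k => (βS k : ℝ)) (fun k => (βT k : ℝ)) ∧ L.length = m) :
    ∃ L' : List OpLeqAdd,
      IsDiffLeqAdd α L' (fun k => (βS k : ℝ)) (fun k => (βT k : ℝ)) ∧
      L'.length ≤ 2 * m := by
  obtain ⟨L, hL, rfl⟩ := h
  exact ⟨L.flatMap OpRangeAdd.toLeqAdd, (applyOpsLeqAdd_flatMap_toLeqAdd α L _).trans hL,
    (length_flatMap_toLeqAdd L).le⟩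

/-- If there is a diff from `β_S` to `β_T` under `F(R,+)` of cost `m`, then there is a
diff from `β_S` to `β_T` of cost at most `2m` using only operations with at-most
conditions and increment modifiers. -/
theorem exists_atMost_diff_of_range_diff {K : Type*} [Fintype K] (α : K → ℤ)
    (βS βT : K → ℤ) (m : ℕ)
    (h : ∃ L : List OpRangeAdd,
      IsDiffRangeAdd α L (fun k => (βS k : ℝ)) (fun k => (βT k : ℝ)) ∧ L.length = m) :
    ∃ L' : List OpLeqAdd,
      IsDiffLeqAdd α L' (fun k => (βS k : ℝ)) (fun k => (βT k : ℝ)) ∧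
      L'.length ≤ 2 * m :=
  exists_atMost_diff_of_range_diff_general α βS βT m h
end

section
/- Let α : K → ℤ be fixed A-values on a finite key set K and let β_S, β_T : K → ℤ, and construct a two-read-only-attribute instance with the same key set and B-values, where the attribute values are α₁(k) = α(k) and α₂(k) = −α(k). Then for every positive integer n, the best diffs from β_S to β_T under the one-attribute family F(R,+) have cost n if and only if the best diffs from β_S to β_T under the two-attribute family F(≤,+) have cost n. -/
open scoped Classical

/-- An operation of the two-attribute family `F(≤,+)`: the condition is a nonempty
conjunction of at-most clauses, at most one clause per attribute (`A₁ ≤ c₁` and/or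
`A₂ ≤ c₂`, encoded by optional thresholds, at least one present), and the modifier is the
increment `B ← B + b`. -/
structure OpTwoLeqAdd where
  c1 : Option ℝ
  c2 : Option ℝ
  hne : c1.isSome ∨ c2.isSome
  b : ℝ

/-- The condition of a two-attribute at-most operation on a key `k` with attribute values
`α₁ k` and `α₂ k`: all present clauses must be satisfied. -/
def OpTwoLeqAdd.cond {K : Type*} (α₁ α₂ : K → ℤ) (f : OpTwoLeqAdd) (k : K) : Prop :=
  (∀ r : ℝ, f.c1 = some r → (α₁ k : ℝ) ≤ r) ∧ (∀ r : ℝ, f.c2 = some r → (α₂ k : ℝ) ≤ r)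

/-- Applying a two-attribute at-most/increment operation. -/
noncomputable def OpTwoLeqAdd.apply {K : Type*} (α₁ α₂ : K → ℤ) (f : OpTwoLeqAdd)
    (β : K → ℝ) : K → ℝ :=
  fun k => if f.cond α₁ α₂ k then β k + f.b else β k

/-- Successive application of a finite sequence of two-attribute operations. -/
noncomputable def applyOpsTwoLeqAdd {K : Type*} (α₁ α₂ : K → ℤ) (L : List OpTwoLeqAdd)
    (β : K → ℝ) : K → ℝ :=
  L.foldl (fun β' f => f.apply α₁ α₂ β') β

/-- `L` is a diff from `βS` to `βT` under the two-attribute family `F(≤,+)`. -/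
def IsDiffTwoLeqAdd {K : Type*} (α₁ α₂ : K → ℤ) (L : List OpTwoLeqAdd) (βS βT : K → ℝ) :
    Prop :=
  applyOpsTwoLeqAdd α₁ α₂ L βS = βT

/-- `L` is a best diff under the two-attribute family `F(≤,+)`. -/
def IsBestDiffTwoLeqAdd {K : Type*} (α₁ α₂ : K → ℤ) (L : List OpTwoLeqAdd)
    (βS βT : K → ℝ) : Prop :=
  IsDiffTwoLeqAdd α₁ α₂ L βS βT ∧
    ∀ L' : List OpTwoLeqAdd, IsDiffTwoLeqAdd α₁ α₂ L' βS βT → L.length ≤ L'.length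

/-- Translate a range operation to a two-attribute at-most operation. -/
def toTwo (f : OpRangeAdd) : OpTwoLeqAdd :=
  ⟨some f.z, some (-f.a), Or.inl rfl, f.b⟩

lemma toTwo_apply {K : Type*} (α : K → ℤ) (f : OpRangeAdd) (β : K → ℝ) :
    (toTwo f).apply α (fun k => -α k) β = f.apply α β := by
  funext k
  have hiff : (toTwo f).cond α (fun k => -α k) k ↔ f.cond (α k) := by
    simp only [toTwo, OpTwoLeqAdd.cond, OpRangeAdd.cond, Option.some.injEq,
      forall_eq', Int.cast_neg]
    constructor
    · rintro ⟨h1, h2⟩; exact ⟨by linarith, h1⟩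
    · rintro ⟨h1, h2⟩; exact ⟨h2, by linarith⟩
  simp only [OpTwoLeqAdd.apply, OpRangeAdd.apply, hiff]
  rfl

/-- Translate a two-attribute at-most operation to a range operation, given bounds
`lo`, `hi` on all attribute values. -/
noncomputable def twoToRange (lo hi : ℝ) (g : OpTwoLeqAdd) : OpRangeAdd :=
  match g.c1, g.c2 with
  | some c1, some c2 =>
      if h : -c2 ≤ c1 then ⟨-c2, c1, h, g.b⟩ else ⟨1/2, 1/2, le_rfl, g.b⟩
  | some c1, none => ⟨min lo c1, c1, min_le_right _ _, g.b⟩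
  | none, some c2 => ⟨-c2, max hi (-c2), le_max_right _ _, g.b⟩
  | none, none => ⟨0, 0, le_rfl, g.b⟩

lemma twoToRange_b (lo hi : ℝ) (g : OpTwoLeqAdd) : (twoToRange lo hi g).b = g.b := by
  obtain ⟨oc1, oc2, hne, b⟩ := g
  rcases oc1 with _ | c1 <;> rcases oc2 with _ | c2 <;>
    simp only [twoToRange] <;> try rfl
  split <;> rfl

lemma twoToRange_apply {K : Type*} (α : K → ℤ) (lo hi : ℝ)
    (hlo : ∀ k, lo ≤ (α k : ℝ)) (hhi : ∀ k, (α k : ℝ) ≤ hi)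
    (g : OpTwoLeqAdd) (β : K → ℝ) :
    (twoToRange lo hi g).apply α β = g.apply α (fun k => -α k) β := by
  funext k
  obtain ⟨oc1, oc2, hne, b⟩ := g
  have hiff : (twoToRange lo hi ⟨oc1, oc2, hne, b⟩).cond (α k) ↔
      OpTwoLeqAdd.cond α (fun k => -α k) ⟨oc1, oc2, hne, b⟩ k := by
    rcases oc1 with _ | c1 <;> rcases oc2 with _ | c2
    · simp at hne
    · -- none, some c2
      simp only [twoToRange, OpRangeAdd.cond, OpTwoLeqAdd.cond, Option.some.injEq,
        forall_eq', Int.cast_neg]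
      constructor
      · rintro ⟨h1, h2⟩
        exact ⟨by rintro r ⟨⟩, by linarith⟩
      · rintro ⟨-, h2⟩
        refine ⟨by linarith, ?_⟩
        exact le_trans (hhi k) (le_max_left _ _)
    · -- some c1, none
      simp only [twoToRange, OpRangeAdd.cond, OpTwoLeqAdd.cond, Option.some.injEq,
        forall_eq', Int.cast_neg]
      constructor
      · rintro ⟨h1, h2⟩
        exact ⟨h2, by rintro r ⟨⟩⟩
      · rintro ⟨h1, -⟩
        exact ⟨le_trans (min_le_left _ _) (hlo k), h1⟩
    · -- some c1, some c2
      by_cases h : -c2 ≤ c1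
      · simp only [twoToRange, h, dif_pos, OpRangeAdd.cond, OpTwoLeqAdd.cond,
          Option.some.injEq, forall_eq', Int.cast_neg]
        constructor
        · rintro ⟨h1, h2⟩; exact ⟨h2, by linarith⟩
        · rintro ⟨h1, h2⟩; exact ⟨by linarith, h1⟩
      · simp only [twoToRange, h, dif_neg, not_false_iff, OpRangeAdd.cond,
          OpTwoLeqAdd.cond, Option.some.injEq, forall_eq', Int.cast_neg]
        constructor
        · rintro ⟨h1, h2⟩
          exfalso
          have hv : (α k : ℝ) = 1 / 2 := le_antisymm h2 h1
          have : (2 * α k : ℝ) = 1 := by rw [mul_comm]; field_simp at hv ⊢; linarith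
          have : (2 * α k : ℤ) = 1 := by exact_mod_cast this
          omega
        · rintro ⟨h1, h2⟩
          exfalso
          exact h (by linarith)
  simp only [OpRangeAdd.apply, OpTwoLeqAdd.apply, hiff, twoToRange_b]

lemma applyOps_map_toTwo {K : Type*} (α : K → ℤ) (L : List OpRangeAdd) (β : K → ℝ) :
    applyOpsTwoLeqAdd α (fun k => -α k) (L.map toTwo) β = applyOpsRangeAdd α L β := by
  induction L generalizing β with
  | nil => rfl
  | cons f L ih =>
      show applyOpsTwoLeqAdd α (fun k => -α k) (L.map toTwo)
          ((toTwo f).apply α (fun k => -α k) β) = applyOpsRangeAdd α L (f.apply α β)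
      rw [toTwo_apply, ih]

lemma applyOps_map_twoToRange {K : Type*} (α : K → ℤ) (lo hi : ℝ)
    (hlo : ∀ k, lo ≤ (α k : ℝ)) (hhi : ∀ k, (α k : ℝ) ≤ hi)
    (L : List OpTwoLeqAdd) (β : K → ℝ) :
    applyOpsRangeAdd α (L.map (twoToRange lo hi)) β =
      applyOpsTwoLeqAdd α (fun k => -α k) L β := by
  induction L generalizing β with
  | nil => rfl
  | cons g L ih =>
      show applyOpsRangeAdd α (L.map (twoToRange lo hi)) ((twoToRange lo hi g).apply α β)
          = applyOpsTwoLeqAdd α (fun k => -α k) L (g.apply α (fun k => -α k) β)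
      rw [twoToRange_apply α lo hi hlo hhi, ih]

/-- For the two-attribute instance with `α₁ k = α k` and `α₂ k = -α k` (same keys and
`B`-values), and every positive integer `n`: the best diffs from `β_S` to `β_T` under the
one-attribute family `F(R,+)` have cost `n` if and only if the best diffs from `β_S` to
`β_T` under the two-attribute family `F(≤,+)` have cost `n`. -/
theorem range_best_cost_iff_twoLeq_best_cost {K : Type*} [Fintype K] (α : K → ℤ)
    (βS βT : K → ℤ) (n : ℕ) (hn : 0 < n) :
    (∃ L : List OpRangeAdd,
        IsBestDiffRangeAdd α L (fun k => (βS k : ℝ)) (fun k => (βT k : ℝ)) ∧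
        L.length = n) ↔
      ∃ L : List OpTwoLeqAdd,
        IsBestDiffTwoLeqAdd α (fun k => -α k) L
          (fun k => (βS k : ℝ)) (fun k => (βT k : ℝ)) ∧ L.length = n := by
  obtain ⟨hi, hhi⟩ : ∃ hi : ℝ, ∀ k, (α k : ℝ) ≤ hi := Finite.exists_le _
  obtain ⟨lo', hlo'⟩ : ∃ lo' : ℝ, ∀ k, (-(α k : ℝ)) ≤ lo' := Finite.exists_le _
  have hlo : ∀ k, -lo' ≤ (α k : ℝ) := fun k => by linarith [hlo' k]
  constructor
  · rintro ⟨L, ⟨hd, hm⟩, hlen⟩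
    refine ⟨L.map toTwo, ⟨?_, ?_⟩, by simpa using hlen⟩
    · show applyOpsTwoLeqAdd _ _ _ _ = _
      rw [applyOps_map_toTwo]; exact hd
    · intro L' hd'
      have := hm (L'.map (twoToRange (-lo') hi)) (by
        show applyOpsRangeAdd _ _ _ = _
        rw [applyOps_map_twoToRange α (-lo') hi hlo hhi]; exact hd')
      simpa using this
  · rintro ⟨L, ⟨hd, hm⟩, hlen⟩
    refine ⟨L.map (twoToRange (-lo') hi), ⟨?_, ?_⟩, by simpa using hlen⟩
    · show applyOpsRangeAdd _ _ _ = _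
      rw [applyOps_map_twoToRange α (-lo') hi hlo hhi]; exact hd
    · intro L' hd'
      have := hm (L'.map toTwo) (by
        show applyOpsTwoLeqAdd _ _ _ _ = _
        rw [applyOps_map_toTwo]; exact hd')
      simpa using this
end
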